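/- Qudit subalgebra: fix an integer d ≥ 1, let P₀ := (1/d) • Σ_{j=0}^{d−1} U(2πj/d) (the projection onto the closed span of {e_ℓ : ℓ ≡ 0 mod d}), and for k, k' ∈ Fin d define Q_{k,k'} := V^k ∘ P₀ ∘ (V*)^{k'} (powers taken with the natural-number values of k, k'). Then the Q_{k,k'} satisfy the matrix-unit relations Q_{k,k'}* = Q_{k',k} and Q_{k,k'} ∘ Q_{m,m'} = (if k' = m then Q_{k,m'} else 0) for all k,k',m,m' ∈ Fin d, with Σ_{k ∈ Fin d} Q_{k,k} = 1; consequently there exists an injective unital ℂ-star-algebra homomorphism from Matrix (Fin d) (Fin d) ℂ into B(H) sending the standard matrix unit E_{k,k'} to Q_{k,k'}. -/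

import Mathlib

open Complex

noncomputable section

/-- The Hilbert space `H := ℓ²(ℤ, ℂ)`. -/
abbrev H : Type := lp (fun _ : ℤ => ℂ) 2

/-- The orthonormal basis vectors `e ℓ = lp.single 2 ℓ 1`. -/
def e (ℓ : ℤ) : H := lp.single 2 ℓ 1

/-- `P₀ := (1/d) • Σ_{j<d} U(2πj/d)`, the projection onto the closed span of
`{e ℓ : ℓ ≡ 0 (mod d)}`. -/
def P₀ (U : ℝ → (H →L[ℂ] H)) (d : ℕ) : H →L[ℂ] H :=
  ((1 : ℂ) / d) • ∑ j ∈ Finset.range d, U (2 * Real.pi * j / d)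

/-- The matrix units `Q_{k,k'} := V^k ∘ P₀ ∘ (V*)^{k'}`. -/
def Q (U : ℝ → (H →L[ℂ] H)) (V : unitary (H →L[ℂ] H)) (d : ℕ) (k k' : Fin d) :
    H →L[ℂ] H :=
  ((V : H →L[ℂ] H) ^ (k : ℕ)) ∘L P₀ U d ∘L (star (V : H →L[ℂ] H)) ^ ((k' : ℕ))

/-! On the basis `e ℓ`, `U θ` is diagonal, so the average `P₀` of `U` over the `d`-th roots of
unity multiplies `e ℓ` by `1` or `0` according as `d ∣ ℓ`, while `V` shifts the index by one.
Hence `P₀ (V*)^k V^m P₀ = δ_{km} P₀` for `k, m < d`, since a shift by `m - k ∈ (-d, d)` preserves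
the residue class of `0` only when it vanishes; this gives the matrix-unit relations, and
`∑_k V^k P₀ (V*)^k = 1` because every `ℓ` lies in exactly one residue class. A system of matrix
units summing to `1` defines a unital `⋆`-homomorphism out of `M_d(ℂ)`, which is injective
because `M_d(ℂ)` is a simple ring. -/

namespace Matrix

section MatrixUnits

variable {R A n : Type*} [CommSemiring R] [Semiring A] [Algebra R A] [Fintype n] [DecidableEq n]
  (q : n → n → A) (hmul : ∀ i j k l, q i j * q k l = if j = k then q i l else 0)
  (hsum : ∑ i, q i i = 1)

def algHomOfMatrixUnits : Matrix n n R →ₐ[R] A :=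
  AlgHom.ofLinearMap (liftLinear R fun i j => LinearMap.toSpanSingleton R A (q i j))
    (by
      rw [← hsum, ← Matrix.sum_single_one]
      simp [liftLinear_single])
    (by
      intro M N
      induction M using Matrix.induction_on' with
      | h_zero => simp
      | h_add M M' hM hM' => simp only [add_mul, map_add, hM, hM']
      | h_std_basis i j a =>
        induction N using Matrix.induction_on' with
        | h_zero => simp
        | h_add N N' hN hN' => simp only [mul_add, map_add, hN, hN']
        | h_std_basis k l b =>
          by_cases hjk : j = k
          · subst hjk
            simp [single_mul_single_same, hmul, smul_smul, mul_comm]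
          · simp [hmul, hjk])

@[simp]
theorem algHomOfMatrixUnits_single (i j : n) (a : R) :
    algHomOfMatrixUnits q hmul hsum (single i j a) = a • q i j :=
  liftLinear_single R _ i j a

variable [StarRing R] [StarRing A] [StarModule R A] (hstar : ∀ i j, star (q i j) = q j i)

def starAlgHomOfMatrixUnits : Matrix n n R →⋆ₐ[R] A where
  toAlgHom := algHomOfMatrixUnits q hmul hsum
  map_star' M := by
    change algHomOfMatrixUnits q hmul hsum (star M) = star (algHomOfMatrixUnits q hmul hsum M)
    induction M using Matrix.induction_on' with
    | h_zero => simp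
    | h_add M M' hM hM' => simp only [star_add, map_add, hM, hM']
    | h_std_basis i j a => simp [star_eq_conjTranspose, hstar]

@[simp]
theorem starAlgHomOfMatrixUnits_single (i j : n) (a : R) :
    starAlgHomOfMatrixUnits q hmul hsum hstar (single i j a) = a • q i j :=
  algHomOfMatrixUnits_single q hmul hsum i j a

end MatrixUnits

end Matrix

namespace HilbertBasis

variable {ι 𝕜 E : Type*} [RCLike 𝕜] [NormedAddCommGroup E] [InnerProductSpace 𝕜 E]
  (b : HilbertBasis ι 𝕜 E)

theorem ext_continuousLinearMap {F : Type*} [AddCommMonoid F] [Module 𝕜 F] [TopologicalSpace F]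
    [T2Space F] {A B : E →L[𝕜] F} (h : ∀ i, A (b i) = B (b i)) : A = B :=
  ContinuousLinearMap.ext_on (Submodule.dense_iff_topologicalClosure_eq_top.mpr b.dense_span)
    (by rintro _ ⟨i, rfl⟩; exact h i)

theorem isSelfAdjoint_of_apply_eq_smul [CompleteSpace E] {A : E →L[𝕜] E} {c : ι → ℝ}
    (hA : ∀ i, A (b i) = (c i : 𝕜) • b i) : IsSelfAdjoint A := by
  refine b.ext_continuousLinearMap fun i => b.repr.injective <| lp.ext <| funext fun j => ?_
  simp only [b.repr_apply_apply, ContinuousLinearMap.star_eq_adjoint,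
    ContinuousLinearMap.adjoint_inner_right, hA, inner_smul_left, inner_smul_right,
    RCLike.conj_ofReal]
  by_cases h : j = i
  · rw [h]
  · simp [b.orthonormal.2 h]

end HilbertBasis

theorem pow_apply_of_apply_eq_add {F E : Type*} [FunLike F E E] [Monoid F] [IsOneApplyEqSelf F E]
    [IsMulApplyEqComp F E] {A : F} {f : ℤ → E} {s : ℤ} (hA : ∀ ℓ, A (f ℓ) = f (ℓ + s))
    (n : ℕ) (ℓ : ℤ) : (A ^ n) (f ℓ) = f (ℓ + n * s) := by
  induction n generalizing ℓ with
  | zero => simp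
  | succ n ih => rw [pow_succ, mul_apply_eq_comp, hA, ih]; push_cast; ring_nf

theorem Unitary.star_apply_of_apply_eq {R E : Type*} [Monoid R] [StarMul R] [FunLike R E E]
    [IsOneApplyEqSelf R E] [IsMulApplyEqComp R E] (u : unitary R) {x y : E} (h : (u : R) x = y) :
    star (u : R) y = x := by
  rw [← h, ← mul_apply_eq_comp, Unitary.coe_star_mul_self, one_apply_eq_self]

theorem geom_sum_eq_ite_of_pow_eq_one {K : Type*} [Field K] [DecidableEq K] {z : K} {n : ℕ}
    (hz : z ^ n = 1) : ∑ j ∈ Finset.range n, z ^ j = if z = 1 then (n : K) else 0 := by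
  split_ifs with h
  · simp [h]
  · rw [geom_sum_eq h, hz, sub_self, zero_div]

theorem sum_exp_two_pi_mul_div_eq_ite {d : ℕ} (hd : d ≠ 0) (ℓ : ℤ) :
    ∑ j ∈ Finset.range d, cexp (I * ℓ * ((2 * Real.pi * j / d : ℝ) : ℂ)) =
      if (d : ℤ) ∣ ℓ then (d : ℂ) else 0 := by
  have hζ := Complex.isPrimitiveRoot_exp d hd
  have hterm (j : ℕ) : cexp (I * ℓ * ((2 * Real.pi * j / d : ℝ) : ℂ)) =
      (cexp (2 * Real.pi * I / d) ^ ℓ) ^ j := by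
    rw [← Complex.exp_int_mul, ← Complex.exp_nat_mul]
    push_cast
    ring_nf
  have hpow : (cexp (2 * Real.pi * I / d) ^ ℓ) ^ d = 1 := by
    rw [← zpow_natCast, ← zpow_mul, mul_comm ℓ, zpow_mul, zpow_natCast, hζ.pow_eq_one, one_zpow]
  simp only [hterm, geom_sum_eq_ite_of_pow_eq_one hpow, hζ.zpow_eq_one_iff_dvd]

theorem Fin.intCast_dvd_sub_iff {d : ℕ} {k m : Fin d} : (d : ℤ) ∣ (m : ℤ) - k ↔ k = m :=
  ⟨fun h => Fin.ext <| Nat.ModEq.eq_of_lt_of_lt (Nat.modEq_iff_dvd.mpr h) k.isLt m.isLt,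
    by rintro rfl; simp⟩

theorem Fin.existsUnique_intCast_dvd_sub {d : ℕ} (hd : d ≠ 0) (ℓ : ℤ) :
    ∃! k : Fin d, (d : ℤ) ∣ ℓ - k := by
  have hd' : (0 : ℤ) < d := by omega
  have hlt := Int.emod_lt_of_pos ℓ hd'
  have hnonneg := Int.emod_nonneg ℓ hd'.ne'
  let k₀ : Fin d := ⟨(ℓ % d).toNat, by omega⟩
  have hk₀ : ((k₀ : ℕ) : ℤ) = ℓ % d := Int.toNat_of_nonneg hnonneg
  have hdvd : (d : ℤ) ∣ ℓ - k₀ := hk₀ ▸ Int.dvd_self_sub_of_emod_eq rfl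
  refine ⟨k₀, hdvd, fun k hk => Fin.intCast_dvd_sub_iff.mp ?_⟩
  simpa using dvd_sub hk hdvd

def stdBasis : HilbertBasis ℤ ℂ H := HilbertBasis.ofRepr (LinearIsometryEquiv.refl ℂ H)

theorem stdBasis_apply (ℓ : ℤ) : stdBasis ℓ = e ℓ := by
  classical
  rw [← HilbertBasis.repr_symm_single]
  rfl

theorem e_ne_zero (ℓ : ℤ) : e ℓ ≠ 0 := stdBasis_apply ℓ ▸ stdBasis.orthonormal.ne_zero ℓ

section QuditOperators

variable {U : ℝ → (H →L[ℂ] H)} {V : unitary (H →L[ℂ] H)} {d : ℕ}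

theorem P₀_apply_e (hU : ∀ (θ : ℝ) (ℓ : ℤ), U θ (e ℓ) = cexp (I * ℓ * θ) • e ℓ) (hd : d ≠ 0)
    (ℓ : ℤ) : P₀ U d (e ℓ) = if (d : ℤ) ∣ ℓ then e ℓ else 0 := by
  simp only [P₀, smul_apply, sum_apply, hU, ← Finset.sum_smul, sum_exp_two_pi_mul_div_eq_ite hd,
    smul_smul]
  split_ifs <;> simp [hd]

theorem isSelfAdjoint_P₀ (hU : ∀ (θ : ℝ) (ℓ : ℤ), U θ (e ℓ) = cexp (I * ℓ * θ) • e ℓ)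
    (hd : d ≠ 0) : IsSelfAdjoint (P₀ U d) :=
  stdBasis.isSelfAdjoint_of_apply_eq_smul (c := fun ℓ => if (d : ℤ) ∣ ℓ then 1 else 0) fun ℓ => by
    rw [stdBasis_apply, P₀_apply_e hU hd]
    split_ifs <;> simp

theorem pow_V_apply_e (hV : ∀ ℓ : ℤ, (V : H →L[ℂ] H) (e ℓ) = e (ℓ + 1)) (n : ℕ) (ℓ : ℤ) :
    ((V : H →L[ℂ] H) ^ n) (e ℓ) = e (ℓ + n) := by
  simpa using pow_apply_of_apply_eq_add hV n ℓ

theorem pow_star_V_apply_e (hV : ∀ ℓ : ℤ, (V : H →L[ℂ] H) (e ℓ) = e (ℓ + 1)) (n : ℕ) (ℓ : ℤ) :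
    (star (V : H →L[ℂ] H) ^ n) (e ℓ) = e (ℓ - n) := by
  have hstar (ℓ : ℤ) : star (V : H →L[ℂ] H) (e ℓ) = e (ℓ + -1) :=
    Unitary.star_apply_of_apply_eq V (by rw [hV, neg_add_cancel_right])
  simpa [sub_eq_add_neg] using pow_apply_of_apply_eq_add hstar n ℓ

theorem Q_eq_mul (k k' : Fin d) :
    Q U V d k k' = (V : H →L[ℂ] H) ^ (k : ℕ) * P₀ U d * star (V : H →L[ℂ] H) ^ (k' : ℕ) :=
  (mul_assoc _ _ _).symm

theorem P₀_mul_star_pow_mul_pow_mul_P₀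
    (hU : ∀ (θ : ℝ) (ℓ : ℤ), U θ (e ℓ) = cexp (I * ℓ * θ) • e ℓ)
    (hV : ∀ ℓ : ℤ, (V : H →L[ℂ] H) (e ℓ) = e (ℓ + 1)) (hd : d ≠ 0) (k m : Fin d) :
    P₀ U d * star (V : H →L[ℂ] H) ^ (k : ℕ) * (V : H →L[ℂ] H) ^ (m : ℕ) * P₀ U d =
      if k = m then P₀ U d else 0 :=
  stdBasis.ext_continuousLinearMap fun ℓ => by
    simp only [stdBasis_apply, mul_apply_eq_comp, P₀_apply_e hU hd]
    by_cases hℓ : (d : ℤ) ∣ ℓ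
    · have hshift : (d : ℤ) ∣ ℓ + m - k ↔ k = m := by
        rw [add_sub_assoc, Int.dvd_add_right hℓ, Fin.intCast_dvd_sub_iff]
      simp only [hℓ, if_true, pow_V_apply_e hV, pow_star_V_apply_e hV, P₀_apply_e hU hd, hshift]
      split_ifs with hkm
      · simp [hkm, P₀_apply_e hU hd, hℓ]
      · rfl
    · split_ifs <;> simp [P₀_apply_e hU hd, hℓ]

theorem star_Q (hU : ∀ (θ : ℝ) (ℓ : ℤ), U θ (e ℓ) = cexp (I * ℓ * θ) • e ℓ) (hd : d ≠ 0)
    (k k' : Fin d) : star (Q U V d k k') = Q U V d k' k := by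
  rw [Q_eq_mul, Q_eq_mul, star_mul, star_mul, star_pow, star_pow, star_star,
    (isSelfAdjoint_P₀ hU hd).star_eq, mul_assoc]

theorem Q_mul_Q (hU : ∀ (θ : ℝ) (ℓ : ℤ), U θ (e ℓ) = cexp (I * ℓ * θ) • e ℓ)
    (hV : ∀ ℓ : ℤ, (V : H →L[ℂ] H) (e ℓ) = e (ℓ + 1)) (hd : d ≠ 0) (k k' m m' : Fin d) :
    Q U V d k k' * Q U V d m m' = if k' = m then Q U V d k m' else 0 := by
  have hassoc : Q U V d k k' * Q U V d m m' = (V : H →L[ℂ] H) ^ (k : ℕ) *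
      (P₀ U d * star (V : H →L[ℂ] H) ^ (k' : ℕ) * (V : H →L[ℂ] H) ^ (m : ℕ) * P₀ U d) *
      star (V : H →L[ℂ] H) ^ (m' : ℕ) := by
    simp only [Q_eq_mul, mul_assoc]
  rw [hassoc, P₀_mul_star_pow_mul_pow_mul_P₀ hU hV hd]
  split_ifs <;> simp [Q_eq_mul]

theorem sum_Q_self (hU : ∀ (θ : ℝ) (ℓ : ℤ), U θ (e ℓ) = cexp (I * ℓ * θ) • e ℓ)
    (hV : ∀ ℓ : ℤ, (V : H →L[ℂ] H) (e ℓ) = e (ℓ + 1)) (hd : d ≠ 0) :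
    ∑ k : Fin d, Q U V d k k = 1 :=
  stdBasis.ext_continuousLinearMap fun ℓ => by
    obtain ⟨k₀, hk₀, huniq⟩ := Fin.existsUnique_intCast_dvd_sub hd ℓ
    simp only [stdBasis_apply, sum_apply, Q_eq_mul, mul_apply_eq_comp, pow_star_V_apply_e hV,
      P₀_apply_e hU hd, apply_ite, map_zero, pow_V_apply_e hV, sub_add_cancel]
    rw [Finset.sum_eq_single_of_mem k₀ (Finset.mem_univ _)
      fun k _ hk => if_neg fun h => hk (huniq k h), if_pos hk₀]
    rfl

end QuditOperators

/-- **Qudit subalgebra:** the operators `Q_{k,k'}` satisfy the matrix-unit relations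
and sum to the identity, and consequently there is an injective unital
`ℂ`-star-algebra homomorphism `M_d(ℂ) → B(H)` sending the standard matrix unit
`E_{k,k'}` to `Q_{k,k'}`. -/
theorem qudit_subalgebra
    (U : ℝ → (H →L[ℂ] H)) (V : unitary (H →L[ℂ] H))
    (hU : ∀ (θ : ℝ) (ℓ : ℤ), U θ (e ℓ) = Complex.exp (Complex.I * ℓ * θ) • e ℓ)
    (hV : ∀ ℓ : ℤ, (V : H →L[ℂ] H) (e ℓ) = e (ℓ + 1))
    (d : ℕ) (hd : 1 ≤ d) :
    (∀ k k' : Fin d, star (Q U V d k k') = Q U V d k' k) ∧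
    (∀ k k' m m' : Fin d,
      Q U V d k k' ∘L Q U V d m m' = if k' = m then Q U V d k m' else 0) ∧
    (∑ k : Fin d, Q U V d k k = 1) ∧
    ∃ Φ : Matrix (Fin d) (Fin d) ℂ →⋆ₐ[ℂ] (H →L[ℂ] H),
      Function.Injective Φ ∧
      ∀ k k' : Fin d, Φ (Matrix.single k k' 1) = Q U V d k k' := by
  have hd₀ : d ≠ 0 := Nat.one_le_iff_ne_zero.mp hd
  have : Nonempty (Fin d) := ⟨⟨0, hd⟩⟩
  have : Nontrivial H := ⟨e 0, 0, e_ne_zero 0⟩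
  have hstar := star_Q (V := V) hU hd₀
  have hmul := Q_mul_Q hU hV hd₀
  have hsum := sum_Q_self hU hV hd₀
  let Φ := Matrix.starAlgHomOfMatrixUnits (R := ℂ) (Q U V d) hmul hsum hstar
  exact ⟨hstar, hmul, hsum, Φ, RingHom.injective (Φ : Matrix (Fin d) (Fin d) ℂ →+* (H →L[ℂ] H)),
    fun k k' => by simp [Φ]⟩
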